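/- Suppose Q ∈ Pos(Y⊗X) is diagonal in the standard basis and Y₀ ∈ Herm(X) satisfies 1_Y⊗Y₀ ≤ Q. Then the diagonal operator Y obtained from the completely dephased Λ_X(Y₀) by replacing each negative diagonal entry by 0 also satisfies 1_Y⊗Y ≤ Q, is positive semidefinite, and Tr(Y) ≥ Tr(Y₀). -/

import Mathlib

open Matrix
open scoped Kronecker ComplexOrder

noncomputable section

/-- `Φ ⊗ id` : apply a linear map `Φ` on `L(X)` to the first tensor factor of `L(X ⊗ Z)`. -/
def lmapTensorId {n m k : Type*} [Fintype n] [Fintype k]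
    (Φ : Matrix n n ℂ →ₗ[ℂ] Matrix m m ℂ)
    (M : Matrix (n × k) (n × k) ℂ) : Matrix (m × k) (m × k) ℂ :=
  fun p q => Φ (fun i j => M (i, p.2) (j, q.2)) p.1 q.1

/-- `id ⊗ Ψ` : apply a linear map `Ψ` on `L(Z)` to the second tensor factor of `L(Y ⊗ Z)`. -/
def idTensorLmap {n k l : Type*} [Fintype n] [Fintype k]
    (Ψ : Matrix k k ℂ →ₗ[ℂ] Matrix l l ℂ)
    (M : Matrix (n × k) (n × k) ℂ) : Matrix (n × l) (n × l) ℂ :=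
  fun p q => Ψ (fun a b => M (p.1, a) (q.1, b)) p.2 q.2

/-- Complete positivity: `Φ ⊗ id_k` maps positive semidefinite operators to positive
semidefinite operators for every finite-dimensional ancilla `k`. -/
def IsCompletelyPositive {n m : Type*} [Fintype n] [Fintype m]
    (Φ : Matrix n n ℂ →ₗ[ℂ] Matrix m m ℂ) : Prop :=
  ∀ (k : Type) [Fintype k] [DecidableEq k],
    ∀ M : Matrix (n × k) (n × k) ℂ, M.PosSemidef → (lmapTensorId Φ M).PosSemidef

def IsTracePreserving {n m : Type*} [Fintype n] [Fintype m]
    (Φ : Matrix n n ℂ →ₗ[ℂ] Matrix m m ℂ) : Prop :=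
  ∀ M : Matrix n n ℂ, (Φ M).trace = M.trace

/-- Partial trace over the first tensor factor. -/
def trFst {n k : Type*} [Fintype n] (M : Matrix (n × k) (n × k) ℂ) : Matrix k k ℂ :=
  fun a b => ∑ i : n, M (i, a) (i, b)

/-- Partial trace over the second tensor factor. -/
def trSnd {n k : Type*} [Fintype k] (M : Matrix (n × k) (n × k) ℂ) : Matrix n n ℂ :=
  fun i j => ∑ a : k, M (i, a) (j, a)

/-- Hilbert-Schmidt inner product `⟨A, B⟩ = Tr(A* B)`. -/
def minner {n : Type*} [Fintype n] (A B : Matrix n n ℂ) : ℂ := (Aᴴ * B).trace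

/-- Square root of a positive semidefinite matrix, as `Matrix.PosSemidef.sqrt` was defined
in the older Mathlib. -/
def posSemidefSqrt {n : Type*} [Fintype n] [DecidableEq n] {A : Matrix n n ℂ}
    (hA : A.PosSemidef) : Matrix n n ℂ :=
  hA.1.eigenvectorUnitary.1 * diagonal ((↑) ∘ (Real.sqrt ·) ∘ hA.1.eigenvalues) *
    (star hA.1.eigenvectorUnitary : Matrix n n ℂ)

open Classical in
/-- Square root of a positive semidefinite matrix (junk value `0` otherwise). -/
def msqrt {n : Type*} [Fintype n] [DecidableEq n] (M : Matrix n n ℂ) : Matrix n n ℂ :=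
  if h : M.PosSemidef then posSemidefSqrt h else 0

/-- Trace norm `‖M‖₁ = Tr √(M* M)`. -/
def traceNorm {n : Type*} [Fintype n] [DecidableEq n] (M : Matrix n n ℂ) : ℝ :=
  ((posSemidefSqrt (Matrix.posSemidef_conjTranspose_mul_self M)).trace).re

/-- Fidelity `F(Q, R) = ‖√Q √R‖₁` of positive semidefinite matrices. -/
def fid {n : Type*} [Fintype n] [DecidableEq n] (Q R : Matrix n n ℂ) : ℝ :=
  traceNorm (msqrt Q * msqrt R)

/-- Choi-Jamiolkowski operator `J(Φ) = Σ_{i,j} Φ(|i⟩⟨j|) ⊗ |i⟩⟨j|`. -/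
def choi {n m : Type*} [Fintype n] [DecidableEq n] [Fintype m]
    (Φ : Matrix n n ℂ →ₗ[ℂ] Matrix m m ℂ) : Matrix (m × n) (m × n) ℂ :=
  fun p q => Φ (Matrix.single p.2 q.2 1) p.1 q.1

/-- Tensor product of vectors. -/
def tensorVec {α β : Type*} (v : α → ℂ) (w : β → ℂ) : α × β → ℂ := fun p => v p.1 * w p.2

/-- `u = (|00⟩ + |11⟩)/√2`. -/
def uVec : Fin 2 × Fin 2 → ℂ := fun p =>
  if p = (0, 0) then (Real.sqrt 2 : ℂ)⁻¹ else if p = (1, 1) then (Real.sqrt 2 : ℂ)⁻¹ else 0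

/-- `v = cos(π/8)|00⟩ + sin(π/8)|11⟩`. -/
def vVec : Fin 2 × Fin 2 → ℂ := fun p =>
  if p = (0, 0) then (Real.cos (Real.pi / 8) : ℂ)
  else if p = (1, 1) then (Real.sin (Real.pi / 8) : ℂ) else 0

/-- `w = -sin(π/8)|00⟩ + cos(π/8)|11⟩`. -/
def wVec : Fin 2 × Fin 2 → ℂ := fun p =>
  if p = (0, 0) then -(Real.sin (Real.pi / 8) : ℂ)
  else if p = (1, 1) then (Real.cos (Real.pi / 8) : ℂ) else 0


/- Since `Q` is diagonal, so is `Q - 1 ⊗ Y`. Its diagonal entry at `(a, i)` is `Q_{(a,i)}` when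
`Re Y₀_{ii} < 0` and otherwise has the real part of `Q_{(a,i)} - Y₀_{ii}`, a diagonal entry of
`Q - 1 ⊗ Y₀`; either way it is nonnegative. -/

theorem Complex.sub_ofReal_max_re_zero_nonneg {q z : ℂ} (hq : 0 ≤ q) (hqz : 0 ≤ q - z) :
    0 ≤ q - ((max z.re 0 : ℝ) : ℂ) := by
  rw [Complex.nonneg_iff] at hq hqz ⊢
  simp only [sub_re, sub_im, ofReal_re, ofReal_im, sub_zero, sub_nonneg] at hqz ⊢
  exact ⟨max_le (by linarith) hq.1, hq.2⟩

theorem Matrix.IsDiag.posSemidef_sub_one_kronecker_diagonal_iff {m n R : Type*}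
    [DecidableEq m] [DecidableEq n] [CommRing R] [PartialOrder R] [StarRing R]
    [StarOrderedRing R] {Q : Matrix (m × n) (m × n) R} (hQ : Q.IsDiag) (d : n → R) :
    (Q - (1 : Matrix m m R) ⊗ₖ diagonal d).PosSemidef ↔ ∀ p, 0 ≤ Q p p - d p.2 := by
  conv_lhs => rw [← hQ.diagonal_diag, ← diagonal_one, diagonal_kronecker_diagonal,
    diagonal_sub, posSemidef_diagonal_iff]
  simp only [diag_apply, one_mul]

theorem stmt16_general {y x : Type*} [Fintype y] [DecidableEq y] [Fintype x] [DecidableEq x]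
    (Q : Matrix (y × x) (y × x) ℂ) (hQ : Q.PosSemidef) (hQdiag : Q.IsDiag)
    (Y₀ : Matrix x x ℂ)
    (hfeas : (Q - ((1 : Matrix y y ℂ) ⊗ₖ Y₀)).PosSemidef) :
    let Y : Matrix x x ℂ := Matrix.diagonal (fun i => ((max ((Y₀ i i).re) 0 : ℝ) : ℂ))
    (Q - ((1 : Matrix y y ℂ) ⊗ₖ Y)).PosSemidef ∧ Y.PosSemidef ∧
      Y₀.trace.re ≤ Y.trace.re := by
  intro Y
  have hQY₀ : ∀ p : y × x, 0 ≤ Q p p - Y₀ p.2 p.2 := fun p => by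
    simpa using hfeas.diag_nonneg (i := p)
  refine ⟨?_, posSemidef_diagonal_iff.mpr fun i => by simp, ?_⟩
  · rw [hQdiag.posSemidef_sub_one_kronecker_diagonal_iff]
    exact fun p => Complex.sub_ofReal_max_re_zero_nonneg hQ.diag_nonneg (hQY₀ p)
  · simp only [Y, trace, diag_apply, diagonal_apply_eq, Complex.re_sum, Complex.ofReal_re]
    gcongr
    exact le_max_left _ _

/-- If `Q` is diagonal positive semidefinite and the Hermitian `Y₀` satisfies
`1_Y ⊗ Y₀ ≤ Q`, then the diagonal matrix obtained from the dephasing of `Y₀` by replacing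
negative diagonal entries with `0` is also dual feasible, positive semidefinite, and has at
least as large a trace. -/
theorem stmt16 {y x : Type*} [Fintype y] [DecidableEq y] [Fintype x] [DecidableEq x]
    (Q : Matrix (y × x) (y × x) ℂ) (hQ : Q.PosSemidef) (hQdiag : Q.IsDiag)
    (Y₀ : Matrix x x ℂ) (hY₀ : Y₀.IsHermitian)
    (hfeas : (Q - ((1 : Matrix y y ℂ) ⊗ₖ Y₀)).PosSemidef) :
    let Y : Matrix x x ℂ := Matrix.diagonal (fun i => ((max ((Y₀ i i).re) 0 : ℝ) : ℂ))
    (Q - ((1 : Matrix y y ℂ) ⊗ₖ Y)).PosSemidef ∧ Y.PosSemidef ∧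
      Y₀.trace.re ≤ Y.trace.re :=
  stmt16_general Q hQ hQdiag Y₀ hfeas

end
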